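/- Let (a_n), a sequence of nonnegative measurable functions u_n : [0,T] → ℝ satisfy u_n(t) ≤ A + C ∫_t^T u_n(s^+) ds + C, where s^+ denotes the right endpoint shift s ↦ min(T, ⌊2^n s⌋/2^n + 2/2^n). Then sup_n sup_{t∈[0,T]} u_n(t) ≤ (A + C) e^{C T}. -/
import Mathlib

open MeasureTheory ProbabilityTheory Real Set Filter

/-- Right endpoint shift `s⁺ = min(T, (⌊2ⁿ s⌋ + 2)/2ⁿ)`. -/
noncomputable def splus (T : ℝ) (n : ℕ) (s : ℝ) : ℝ :=
  min T (((⌊(2:ℝ)^n * s⌋ : ℝ) + 2) / 2^n)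

lemma le_splus_aux {T s : ℝ} (n : ℕ) (hs : s ≤ T) : s ≤ splus T n s := by
  refine le_min hs ?_
  rw [le_div_iff₀ (by positivity : (0:ℝ) < 2^n)]
  have h := Int.lt_floor_add_one ((2:ℝ)^n * s)
  nlinarith [h]

lemma splus_le_aux (T : ℝ) (n : ℕ) (s : ℝ) : splus T n s ≤ T := min_le_left _ _

lemma splus_meas_aux (T : ℝ) (n : ℕ) : Measurable (splus T n) := by
  apply measurable_const.min
  apply Measurable.div_const
  apply Measurable.add_const
  exact Measurable.comp measurable_from_top
    (Measurable.floor (measurable_const.mul measurable_id))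

lemma integ_aux (Cc T t : ℝ) (k : ℕ) :
    Cc * ∫ s in t..T, (Cc*(T-s))^k / (k.factorial : ℝ)
      = (Cc*(T-t))^(k+1) / ((k+1).factorial : ℝ) := by
  have h1 : (∫ s in t..T, (Cc*(T-s))^k / (k.factorial : ℝ))
      = (∫ s in t..T, (T-s)^k) * (Cc^k / (k.factorial : ℝ)) := by
    rw [← intervalIntegral.integral_mul_const]
    congr 1; ext s; rw [mul_pow]; ring
  have h2 : (∫ s in t..T, (T-s)^k) = (T-t)^(k+1)/(k+1) := by
    have h := intervalIntegral.integral_comp_sub_left (a := t) (b := T) (fun x => x^k) T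
    rw [h, integral_pow]; simp
  have hk : ((k:ℝ)+1) ≠ 0 := by positivity
  have hf : ((k.factorial : ℝ)) ≠ 0 := by positivity
  rw [h1, h2, Nat.factorial_succ, mul_pow]
  push_cast
  field_simp
  ring

set_option maxHeartbeats 1000000 in
/-- Backward Gronwall with shifted integrand: if nonnegative bounded
measurable `u_n` satisfy `u_n(t) ≤ A + C ∫_t^T u_n(s⁺) ds + C`, then
`sup_n sup_{t ∈ [0,T]} u_n(t) ≤ (A + C) e^{C T}`. -/
theorem backward_gronwall_shifted
    (T A C : ℝ) (hT : 0 < T) (hA : 0 ≤ A) (hC : 0 ≤ C)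
    (u : ℕ → ℝ → ℝ)
    (hnonneg : ∀ n t, 0 ≤ u n t)
    (hmeas : ∀ n, Measurable (u n))
    (hbdd : ∀ n, ∃ M : ℝ, ∀ t ∈ Set.Icc (0:ℝ) T, u n t ≤ M)
    (hineq : ∀ n, ∀ t ∈ Set.Icc (0:ℝ) T,
      u n t ≤ A + C * (∫ s in t..T, u n (splus T n s)) + C) :
    ∀ n, ∀ t ∈ Set.Icc (0:ℝ) T, u n t ≤ (A + C) * Real.exp (C * T) := by
  intro n
  obtain ⟨M₀, hM₀⟩ := hbdd n
  set M : ℝ := max M₀ 0 with hMdef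
  have hMb : ∀ s ∈ Icc (0:ℝ) T, u n s ≤ M := fun s hs =>
    (hM₀ s hs).trans (le_max_left _ _)
  have hM0 : (0:ℝ) ≤ M := le_max_right _ _
  -- the iterated bound
  have key : ∀ m : ℕ, ∀ t ∈ Icc (0:ℝ) T,
      u n t ≤ (A + C) * (∑ k ∈ Finset.range m, (C*(T-t))^k / (k.factorial : ℝ))
            + M * ((C*(T-t))^m / (m.factorial : ℝ)) := by
    intro m
    induction m with
    | zero =>
      intro t ht
      simpa using hMb t ht
    | succ m ih =>
      intro t ht
      set f : ℝ → ℝ := fun s =>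
        (A + C) * (∑ k ∈ Finset.range m, (C*(T-s))^k / (k.factorial : ℝ))
          + M * ((C*(T-s))^m / (m.factorial : ℝ)) with hf
      have hfc : Continuous f := by
        apply Continuous.add
        · exact continuous_const.mul (continuous_finset_sum _ fun k _ =>
            (((continuous_const.mul (continuous_const.sub continuous_id)).pow k).div_const _))
        · exact continuous_const.mul
            (((continuous_const.mul (continuous_const.sub continuous_id)).pow m).div_const _)
      -- pointwise bound on [t,T]
      have hpt : ∀ s ∈ Icc t T, u n (splus T n s) ≤ f s := by
        intro s hs
        have hs0 : (0:ℝ) ≤ s := le_trans ht.1 hs.1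
        have hsp1 : s ≤ splus T n s := le_splus_aux n hs.2
        have hsp2 : splus T n s ≤ T := splus_le_aux T n s
        have h1 : u n (splus T n s) ≤ f (splus T n s) :=
          ih (splus T n s) ⟨le_trans hs0 hsp1, hsp2⟩
        refine h1.trans ?_
        have hmono : ∀ k : ℕ, (C*(T - splus T n s))^k ≤ (C*(T - s))^k := by
          intro k
          apply pow_le_pow_left₀ (mul_nonneg hC (by linarith))
          exact mul_le_mul_of_nonneg_left (by linarith) hC
        simp only [hf]
        apply add_le_add
        · apply mul_le_mul_of_nonneg_left _ (by linarith : (0:ℝ) ≤ A + C)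
          apply Finset.sum_le_sum
          intro k _
          exact div_le_div_of_nonneg_right (hmono k) (by positivity)
        · apply mul_le_mul_of_nonneg_left _ hM0
          exact div_le_div_of_nonneg_right (hmono m) (by positivity)
      -- integrability
      have hint1 : IntervalIntegrable (fun s => u n (splus T n s)) volume t T := by
        rw [intervalIntegrable_iff]
        apply Measure.integrableOn_of_bounded (M := M)
        · rw [Set.uIoc]; exact measure_Ioc_lt_top.ne
        · exact ((hmeas n).comp (splus_meas_aux T n)).aestronglyMeasurable
        · filter_upwards [ae_restrict_mem measurableSet_uIoc] with s hs
          rw [Real.norm_eq_abs, abs_of_nonneg (hnonneg n _)]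
          rcases hs with ⟨hs1, hs2⟩
          have hs1' : t ⊓ T = t := inf_eq_left.mpr ht.2
          have hs2' : t ⊔ T = T := sup_eq_right.mpr ht.2
          apply hMb
          constructor
          · refine le_trans ?_ (le_splus_aux n ?_)
            · exact le_trans ht.1 (le_of_lt (by rw [hs1'] at hs1; exact hs1))
            · rw [hs2'] at hs2; exact hs2
          · exact splus_le_aux T n _
      have hint2 : IntervalIntegrable f volume t T := hfc.intervalIntegrable _ _
      -- integral comparison
      have hIle : (∫ s in t..T, u n (splus T n s)) ≤ ∫ s in t..T, f s :=
        intervalIntegral.integral_mono_on ht.2 hint1 hint2 hpt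
      -- compute C * ∫ f
      have hintg : ∀ k : ℕ, IntervalIntegrable
          (fun s => (C*(T-s))^k / (k.factorial:ℝ)) volume t T := fun k =>
        ((((continuous_const.mul (continuous_const.sub continuous_id)).pow k).div_const
          _).intervalIntegrable _ _)
      have hCint : C * (∫ s in t..T, f s)
          = (A+C) * (∑ k ∈ Finset.range m, (C*(T-t))^(k+1) / ((k+1).factorial : ℝ))
            + M * ((C*(T-t))^(m+1) / ((m+1).factorial : ℝ)) := by
        have hsplit : (∫ s in t..T, f s)
            = (A+C) * (∑ k ∈ Finset.range m,
                ∫ s in t..T, (C*(T-s))^k / (k.factorial:ℝ))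
              + M * (∫ s in t..T, (C*(T-s))^m / (m.factorial:ℝ)) := by
          have hga : IntervalIntegrable
              (fun s => (A+C) * ∑ k ∈ Finset.range m, (C*(T-s))^k / (k.factorial:ℝ))
              volume t T :=
            (((continuous_finset_sum _ fun k _ =>
              ((continuous_const.mul (continuous_const.sub continuous_id)).pow k).div_const
                _).intervalIntegrable _ _)).const_mul (A+C)
          have hgb : IntervalIntegrable
              (fun s => M * ((C*(T-s))^m / (m.factorial:ℝ))) volume t T :=
            (hintg m).const_mul M
          simp only [hf]
          rw [intervalIntegral.integral_add hga hgb,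
            intervalIntegral.integral_const_mul, intervalIntegral.integral_const_mul,
            intervalIntegral.integral_finset_sum (fun k _ => hintg k)]
        rw [hsplit]
        calc C * (((A+C) * ∑ k ∈ Finset.range m,
                ∫ s in t..T, (C*(T-s))^k / (k.factorial:ℝ))
              + M * (∫ s in t..T, (C*(T-s))^m / (m.factorial:ℝ)))
            = (A+C) * (C * ∑ k ∈ Finset.range m,
                ∫ s in t..T, (C*(T-s))^k / (k.factorial:ℝ))
              + M * (C * ∫ s in t..T, (C*(T-s))^m / (m.factorial:ℝ)) := by ring
          _ = (A+C) * (∑ k ∈ Finset.range m,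
                C * ∫ s in t..T, (C*(T-s))^k / (k.factorial:ℝ))
              + M * (C * ∫ s in t..T, (C*(T-s))^m / (m.factorial:ℝ)) := by
                rw [Finset.mul_sum]
          _ = (A+C) * (∑ k ∈ Finset.range m, (C*(T-t))^(k+1) / ((k+1).factorial : ℝ))
              + M * ((C*(T-t))^(m+1) / ((m+1).factorial : ℝ)) := by
                simp_rw [integ_aux C T t]
      -- conclude the inductive step
      have step := hineq n t ht
      have : u n t ≤ A + C * (∫ s in t..T, f s) + C := by
        refine step.trans ?_
        have := mul_le_mul_of_nonneg_left hIle hC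
        linarith
      rw [hCint] at this
      refine this.trans (le_of_eq ?_)
      rw [Finset.sum_range_succ']
      simp only [pow_zero, Nat.factorial_zero, Nat.cast_one]
      ring
  -- pass to the limit
  intro t ht
  set x : ℝ := C * (T - t) with hxdef
  have hx : (0:ℝ) ≤ x := mul_nonneg hC (by linarith [ht.2])
  have hb : ∀ m : ℕ, u n t ≤ (A + C) * Real.exp x + M * (x^m / (m.factorial : ℝ)) := by
    intro m
    refine (key m t ht).trans ?_
    have hs := Real.sum_le_exp_of_nonneg hx m
    have h2 := mul_le_mul_of_nonneg_left hs (by linarith : (0:ℝ) ≤ A + C)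
    linarith
  have htend : Tendsto (fun m : ℕ => (A + C) * Real.exp x + M * (x^m / (m.factorial : ℝ)))
      atTop (nhds ((A + C) * Real.exp x + M * 0)) :=
    tendsto_const_nhds.add (tendsto_const_nhds.mul
      (FloorSemiring.tendsto_pow_div_factorial_atTop x))
  have hle : u n t ≤ (A + C) * Real.exp x + M * 0 := ge_of_tendsto' htend hb
  rw [mul_zero, add_zero] at hle
  refine hle.trans ?_
  apply mul_le_mul_of_nonneg_left (Real.exp_le_exp.mpr ?_) (by linarith)
  nlinarith [ht.1, ht.2, hC]
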